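/- arXiv:2307.11523 — 3 statements merged into one kernel-verified Lean document; each statement's English description precedes it below -/
import Mathlib

section
/- Let f(θ) = |z_0 + z e^{jθ}|² with z_0, z ∈ ℂ, and let y_1 = f(0), y_2 = f(π/2), y_3 = f(π). Then y_1 − y_3 = 4 Re(z_0 z̄) and 2y_2 − y_1 − y_3 = 4 Im(z_0 z̄); consequently, if z_0 z̄ ≠ 0, θ⋆ = arg((y_1 − y_3) + j(2y_2 − y_1 − y_3)) maximizes f over ℝ. -/
/-!
With `w = z₀ * conj z`, expanding the square gives
`f θ = ‖z₀‖² + ‖z‖² + 2 (w.re cos θ + w.im sin θ) = ‖z₀‖² + ‖z‖² + 2 ‖w‖ cos (θ - arg w)`,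
so `f` is maximal at `θ = arg w`. The samples at `0, π/2, π` read off `4 w`, which has the same
argument.
-/

open Complex ComplexConjugate

namespace Complex

theorem sq_norm_add_mul_exp_ofReal_mul_I (z₀ z : ℂ) (θ : ℝ) :
    ‖z₀ + z * exp (θ * I)‖ ^ 2 =
      normSq z₀ + normSq z +
        2 * ((z₀ * conj z).re * Real.cos θ + (z₀ * conj z).im * Real.sin θ) := by
  rw [Complex.sq_norm]
  simp only [normSq_apply, add_re, add_im, mul_re, mul_im, exp_ofReal_mul_I_re,
    exp_ofReal_mul_I_im, conj_re, conj_im]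
  linear_combination (z.re ^ 2 + z.im ^ 2) * Real.sin_sq_add_cos_sq θ

theorem re_mul_cos_add_im_mul_sin (w : ℂ) (θ : ℝ) :
    w.re * Real.cos θ + w.im * Real.sin θ = ‖w‖ * Real.cos (θ - arg w) := by
  rw [Real.cos_sub, ← norm_mul_cos_arg, ← norm_mul_sin_arg]
  ring

theorem sq_norm_add_mul_exp_ofReal_mul_I_le (z₀ z : ℂ) (θ : ℝ) :
    ‖z₀ + z * exp (θ * I)‖ ^ 2 ≤ ‖z₀ + z * exp (arg (z₀ * conj z) * I)‖ ^ 2 := by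
  simp only [sq_norm_add_mul_exp_ofReal_mul_I, re_mul_cos_add_im_mul_sin, sub_self, Real.cos_zero]
  gcongr
  exact Real.cos_le_one _

end Complex

theorem stmt_6 (z₀ z : ℂ) (y₁ y₂ y₃ : ℝ)
    (h₁ : y₁ = ‖z₀ + z * Complex.exp ((0 : ℂ) * Complex.I)‖ ^ 2)
    (h₂ : y₂ = ‖z₀ + z * Complex.exp (((Real.pi / 2 : ℝ) : ℂ) * Complex.I)‖ ^ 2)
    (h₃ : y₃ = ‖z₀ + z * Complex.exp (((Real.pi : ℝ) : ℂ) * Complex.I)‖ ^ 2) :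
    y₁ - y₃ = 4 * (z₀ * (starRingEnd ℂ) z).re ∧
    2 * y₂ - y₁ - y₃ = 4 * (z₀ * (starRingEnd ℂ) z).im ∧
    (z₀ * (starRingEnd ℂ) z ≠ 0 →
      ∀ θ : ℝ, ‖z₀ + z * Complex.exp ((θ : ℂ) * Complex.I)‖ ^ 2 ≤
        ‖z₀ + z * Complex.exp
          ((Complex.arg (((y₁ - y₃ : ℝ) : ℂ) + ((2 * y₂ - y₁ - y₃ : ℝ) : ℂ) * Complex.I) : ℂ)
            * Complex.I)‖ ^ 2) := by
  set w := z₀ * conj z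
  rw [← ofReal_zero] at h₁
  simp only [sq_norm_add_mul_exp_ofReal_mul_I, Real.cos_zero, Real.sin_zero, Real.cos_pi_div_two,
    Real.sin_pi_div_two, Real.cos_pi, Real.sin_pi] at h₁ h₂ h₃
  have hre : y₁ - y₃ = 4 * w.re := by rw [h₁, h₃]; ring
  have him : 2 * y₂ - y₁ - y₃ = 4 * w.im := by rw [h₁, h₂, h₃]; ring
  have hsample :
      ((y₁ - y₃ : ℝ) : ℂ) + ((2 * y₂ - y₁ - y₃ : ℝ) : ℂ) * I = (4 : ℝ) * w := by
    rw [hre, him]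
    apply Complex.ext <;> simp
  refine ⟨hre, him, fun _ θ => ?_⟩
  rw [hsample, arg_real_mul w (by norm_num)]
  exact sq_norm_add_mul_exp_ofReal_mul_I_le z₀ z θ
end

section
/- Let z_1,...,z_N be nonzero complex numbers and for each n define u_n = ∑_{i≠n} z_i. If for every n, u_n ≠ 0 and Arg(z_n) = Arg(u_n), then Arg(z_1) = Arg(z_2) = ... = Arg(z_N). -/
/-! Since `u n` has the argument of `z n`, the total `∑ i, z i = z n + u n` is a positive real
multiple of `z n`; so every `z n` has the argument of the total. -/

open Complex

namespace Complex

theorem arg_add_eq_arg_left {z w : ℂ} (hz : z ≠ 0) (hw : w ≠ 0) (h : z.arg = w.arg) :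
    (z + w).arg = z.arg := by
  rw [arg_eq_arg_iff hz hw] at h
  have hsum : z + w = ((1 + ‖w‖ / ‖z‖ : ℝ) : ℂ) * z := by
    conv_lhs => rw [← h]
    push_cast; ring
  rw [hsum, arg_real_mul _ (by positivity)]

end Complex

theorem stmt_9 (N : ℕ) (z : Fin N → ℂ) (hz : ∀ n, z n ≠ 0)
    (u : Fin N → ℂ) (hu : ∀ n, u n = ∑ i ∈ Finset.univ.erase n, z i)
    (h : ∀ n, u n ≠ 0 ∧ (z n).arg = (u n).arg) :
    ∀ m n, (z m).arg = (z n).arg := by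
  have arg_eq_arg_sum : ∀ n, (z n).arg = (∑ i, z i).arg := fun n => by
    rw [← Finset.add_sum_erase _ _ (Finset.mem_univ n), ← hu n,
      arg_add_eq_arg_left (hz n) (h n).1 (h n).2]
  intro m n
  rw [arg_eq_arg_sum m, arg_eq_arg_sum n]
end

section
/- Let z_1,...,z_N be nonzero complex numbers and θ⋆ ∈ ℝ^N a phase vector such that for every n, with w_n = ∑_{i≠n} z_i e^{jθ⋆_i} ≠ 0, one has Arg(z_n e^{jθ⋆_n}) = Arg(w_n). Then f(θ⋆) = (∑_{n=1}^N |z_n|)², i.e., θ⋆ is a global maximizer of f(θ) = |∑_n z_n e^{jθ_n}|². -/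
/-!
If `arg v = arg w` then `v` and `w` lie on a common ray, so `arg (v + w) = arg v`. Hence at a
fixed point every term `vₙ = zₙ e^{jθ⋆ₙ}` has the argument of the whole sum `S`, so
`S = (∑ ‖zₙ‖) e^{j arg S}`, and the triangle inequality `‖∑ zₙ e^{jθₙ}‖ ≤ ∑ ‖zₙ‖` is attained.
-/

open Complex

namespace Complex

theorem arg_add_eq_left_of_arg_eq {v w : ℂ} (h : v.arg = w.arg) : (v + w).arg = v.arg := by
  rcases eq_or_ne v 0 with rfl | hv
  · simpa using h.symm
  obtain ⟨r, hr, rfl⟩ := (sameRay_iff.2 (Or.inr (Or.inr h))).exists_nonneg_left hv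
  have hvw : v + r • v = ((1 + r : ℝ) : ℂ) * v := by
    rw [real_smul]
    push_cast
    ring
  rw [hvw, arg_real_mul v (by positivity)]

theorem norm_sum_eq_sum_norm_of_arg_eq {ι : Type*} {s : Finset ι} {f : ι → ℂ} {θ : ℝ}
    (h : ∀ i ∈ s, (f i).arg = θ) : ‖∑ i ∈ s, f i‖ = ∑ i ∈ s, ‖f i‖ := by
  have hpolar : ∑ i ∈ s, f i = ((∑ i ∈ s, ‖f i‖ : ℝ) : ℂ) * exp (θ * I) := by
    push_cast
    rw [Finset.sum_mul]
    refine Finset.sum_congr rfl fun i hi => ?_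
    rw [← h i hi, norm_mul_exp_arg_mul_I]
  rw [hpolar, norm_mul, norm_exp_ofReal_mul_I, mul_one, norm_real,
    Real.norm_of_nonneg (Finset.sum_nonneg fun i _ => norm_nonneg _)]

theorem norm_sum_eq_sum_norm_of_arg_eq_arg_sum_erase {ι : Type*} [Fintype ι] [DecidableEq ι]
    {v : ι → ℂ} (h : ∀ n, (v n).arg = (∑ i ∈ Finset.univ.erase n, v i).arg) :
    ‖∑ i, v i‖ = ∑ i, ‖v i‖ := by
  have harg : ∀ n ∈ Finset.univ, (v n).arg = (∑ i, v i).arg := fun n _ => by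
    rw [← Finset.add_sum_erase _ _ (Finset.mem_univ n), arg_add_eq_left_of_arg_eq (h n)]
  exact norm_sum_eq_sum_norm_of_arg_eq harg

end Complex

theorem stmt_11_general (N : ℕ) (z : Fin N → ℂ) (θstar : Fin N → ℝ)
    (w : Fin N → ℂ)
    (hw : ∀ n, w n = ∑ i ∈ Finset.univ.erase n, z i * Complex.exp ((θstar i : ℂ) * Complex.I))
    (h : ∀ n, w n ≠ 0 ∧
      (z n * Complex.exp ((θstar n : ℂ) * Complex.I)).arg = (w n).arg) :
    ‖∑ n, z n * Complex.exp ((θstar n : ℂ) * Complex.I)‖ ^ 2 =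
        (∑ n, ‖z n‖) ^ 2 ∧
      ∀ θ : Fin N → ℝ,
        ‖∑ n, z n * Complex.exp ((θ n : ℂ) * Complex.I)‖ ^ 2 ≤
          ‖∑ n, z n * Complex.exp ((θstar n : ℂ) * Complex.I)‖ ^ 2 := by
  have hnorm : ∀ θ : Fin N → ℝ, ∀ n, ‖z n * exp ((θ n : ℂ) * I)‖ = ‖z n‖ := fun θ n => by
    rw [norm_mul, norm_exp_ofReal_mul_I, mul_one]
  have hstar : ‖∑ n, z n * exp ((θstar n : ℂ) * I)‖ = ∑ n, ‖z n‖ := by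
    rw [norm_sum_eq_sum_norm_of_arg_eq_arg_sum_erase fun n => (h n).2.trans (by rw [hw n])]
    exact Finset.sum_congr rfl fun n _ => hnorm θstar n
  refine ⟨by rw [hstar], fun θ => ?_⟩
  rw [hstar]
  gcongr
  calc ‖∑ n, z n * exp ((θ n : ℂ) * I)‖ ≤ ∑ n, ‖z n * exp ((θ n : ℂ) * I)‖ := norm_sum_le _ _
    _ = ∑ n, ‖z n‖ := Finset.sum_congr rfl fun n _ => hnorm θ n

theorem stmt_11 (N : ℕ) (z : Fin N → ℂ) (hz : ∀ n, z n ≠ 0) (θstar : Fin N → ℝ)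
    (w : Fin N → ℂ)
    (hw : ∀ n, w n = ∑ i ∈ Finset.univ.erase n, z i * Complex.exp ((θstar i : ℂ) * Complex.I))
    (h : ∀ n, w n ≠ 0 ∧
      (z n * Complex.exp ((θstar n : ℂ) * Complex.I)).arg = (w n).arg) :
    ‖∑ n, z n * Complex.exp ((θstar n : ℂ) * Complex.I)‖ ^ 2 =
        (∑ n, ‖z n‖) ^ 2 ∧
      ∀ θ : Fin N → ℝ,
        ‖∑ n, z n * Complex.exp ((θ n : ℂ) * Complex.I)‖ ^ 2 ≤
          ‖∑ n, z n * Complex.exp ((θstar n : ℂ) * Complex.I)‖ ^ 2 :=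
  stmt_11_general N z θstar w hw h
end
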